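/- Let 0 < q < 1, p > 1, α > 0, and set E = (∑_{n=0}^∞ q^{n/p'} (q^{n+1}; q)_{α-1})^p with 1/p + 1/p' = 1. For every sequence (a_n)_{n∈ℤ} of nonnegative reals, ∑_{n∈ℤ} (q^{-n/p'} ∑_{k=n}^∞ (q^{k-n+1}; q)_{α-1} q^{k/p'} a_k)^p ≤ E ∑_{n∈ℤ} a_n^p. -/

import Mathlib

open scoped ENNReal

/-- The infinite q-Pochhammer symbol `(a; q)_∞ = ∏_{i≥0} (1 - a qⁱ)`. -/
noncomputable def qPochInf (a q : ℝ) : ℝ := ∏' i : ℕ, (1 - a * q ^ i)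

/-- The q-Pochhammer symbol `(a; q)_β = (a;q)_∞ / (a q^β; q)_∞`. -/
noncomputable def qPoch (a q β : ℝ) : ℝ := qPochInf a q / qPochInf (a * q ^ β) q

/-!
After the powers of `q` are pulled inside, the `n`-th term on the left is
`(∑ₘ gₘ a_{n+m})^p` with the nonnegative weights `gₘ = q^{m/p'} (q^{m+1}; q)_{α-1}`.
The weighted Hölder inequality bounds it by `G^{p-1} ∑ₘ gₘ a_{n+m}^p`, where `G = ∑ₘ gₘ`;
summing over `n` and using the translation invariance of `∑ₙ aₙ^p` gives `G^p ∑ₙ aₙ^p`.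
The constant `G` is finite since `(q^{m+1}; q)_{α-1}` is eventually at most `2`
(Weierstrass' product inequality bounds the denominator from below) while `q^{m/p'}` decays
geometrically.
-/

theorem Finset.one_sub_sum_le_prod_one_sub {ι : Type*} (s : Finset ι) {u : ι → ℝ}
    (h0 : ∀ i ∈ s, 0 ≤ u i) (h1 : ∀ i ∈ s, u i ≤ 1) :
    1 - ∑ i ∈ s, u i ≤ ∏ i ∈ s, (1 - u i) := by
  induction s using Finset.cons_induction with
  | empty => simp
  | cons j s hj ih =>
    simp only [Finset.mem_cons, forall_eq_or_imp] at h0 h1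
    rw [Finset.prod_cons, Finset.sum_cons]
    have hS : 0 ≤ ∑ i ∈ s, u i := Finset.sum_nonneg h0.2
    have hP := ih h0.2 h1.2
    nlinarith [mul_nonneg (sub_nonneg.2 h1.1) (sub_nonneg.2 hP)]

section qPochInf

variable {x q : ℝ}

theorem qPochInf_nonneg (hx1 : x ≤ 1) (hq0 : 0 ≤ q) (hq1 : q ≤ 1) :
    0 ≤ qPochInf x q :=
  tprod_nonneg fun i => sub_nonneg.2 <| mul_le_one₀ hx1 (pow_nonneg hq0 i) (pow_le_one₀ hq0 hq1)

theorem qPochInf_le_one (hx0 : 0 ≤ x) (hx1 : x ≤ 1) (hq0 : 0 ≤ q) (hq1 : q ≤ 1) :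
    qPochInf x q ≤ 1 := by
  rw [qPochInf]
  by_cases h : Multipliable fun i : ℕ => 1 - x * q ^ i
  · refine le_of_tendsto' h.hasProd fun s => Finset.prod_le_one (fun i _ => ?_) fun i _ => ?_
    · exact sub_nonneg.2 <| mul_le_one₀ hx1 (pow_nonneg hq0 i) (pow_le_one₀ hq0 hq1)
    · exact sub_le_self _ (mul_nonneg hx0 (pow_nonneg hq0 i))
  · exact (tprod_eq_one_of_not_multipliable h).le

theorem one_sub_div_le_qPochInf (hx0 : 0 ≤ x) (hx1 : x ≤ 1) (hq0 : 0 ≤ q) (hq1 : q < 1) :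
    1 - x / (1 - q) ≤ qPochInf x q := by
  have hdiv : 0 ≤ x / (1 - q) := div_nonneg hx0 (sub_nonneg.2 hq1.le)
  rw [qPochInf]
  by_cases h : Multipliable fun i : ℕ => 1 - x * q ^ i
  · refine ge_of_tendsto' h.hasProd fun s => ?_
    have hgeom : HasSum (fun i : ℕ => x * q ^ i) (x / (1 - q)) := by
      simpa [div_eq_mul_inv] using (hasSum_geometric_of_lt_one hq0 hq1).mul_left x
    calc 1 - x / (1 - q) ≤ 1 - ∑ i ∈ s, x * q ^ i :=
          sub_le_sub_left (sum_le_hasSum s (fun i _ => mul_nonneg hx0 (pow_nonneg hq0 i)) hgeom) 1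
      _ ≤ ∏ i ∈ s, (1 - x * q ^ i) :=
          s.one_sub_sum_le_prod_one_sub (fun i _ => mul_nonneg hx0 (pow_nonneg hq0 i))
            fun i _ => mul_le_one₀ hx1 (pow_nonneg hq0 i) (pow_le_one₀ hq0 hq1.le)
  · rw [tprod_eq_one_of_not_multipliable h]
    linarith

variable {β : ℝ}

theorem qPoch_nonneg (hx1 : x ≤ 1) (hy1 : x * q ^ β ≤ 1) (hq0 : 0 ≤ q) (hq1 : q ≤ 1) :
    0 ≤ qPoch x q β :=
  div_nonneg (qPochInf_nonneg hx1 hq0 hq1) (qPochInf_nonneg hy1 hq0 hq1)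

theorem qPoch_le_two (hx0 : 0 ≤ x) (hx1 : x ≤ 1) (hy0 : 0 ≤ x * q ^ β)
    (hy : x * q ^ β ≤ (1 - q) / 2) (hq0 : 0 ≤ q) (hq1 : q < 1) : qPoch x q β ≤ 2 := by
  have hden : 1 / 2 ≤ qPochInf (x * q ^ β) q := by
    have h := one_sub_div_le_qPochInf hy0 (by linarith) hq0 hq1
    have : x * q ^ β / (1 - q) ≤ 1 / 2 := by
      rw [div_le_iff₀ (by linarith)]; linarith
    linarith
  rw [qPoch, div_le_iff₀ (by linarith)]
  linarith [qPochInf_le_one hx0 hx1 hq0 hq1.le]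

theorem qPoch_rpow_nonneg {u : ℝ} (hq : 0 < q) (hq1 : q ≤ 1) (hu : 0 ≤ u) (huβ : 0 ≤ u + β) :
    0 ≤ qPoch (q ^ u) q β := by
  refine qPoch_nonneg (Real.rpow_le_one hq.le hq1 hu) ?_ hq.le hq1
  rw [← Real.rpow_add hq]
  exact Real.rpow_le_one hq.le hq1 huβ

end qPochInf

theorem summable_rpow_div_mul_qPoch {q α s : ℝ} (hq : 0 < q) (hq1 : q < 1) (hα : 0 < α)
    (hs : 0 < s) :
    Summable fun m : ℕ => q ^ ((m : ℝ) / s) * qPoch (q ^ ((m : ℝ) + 1)) q (α - 1) := by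
  have harg : ∀ m : ℕ, q ^ ((m : ℝ) + 1) * q ^ (α - 1) = q ^ ((m : ℝ) + α) := fun m => by
    rw [← Real.rpow_add hq]; ring_nf
  have hx1 : ∀ m : ℕ, q ^ ((m : ℝ) + 1) ≤ 1 := fun m =>
    Real.rpow_le_one hq.le hq1.le (by positivity)
  have hsmall : ∀ᶠ m : ℕ in Filter.atTop, q ^ ((m : ℝ) + α) ≤ (1 - q) / 2 := by
    filter_upwards [(tendsto_pow_atTop_nhds_zero_of_lt_one hq.le hq1).eventually
      (ge_mem_nhds (by linarith : (0 : ℝ) < (1 - q) / 2))] with m hm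
    calc q ^ ((m : ℝ) + α) ≤ q ^ (m : ℝ) :=
          Real.rpow_le_rpow_of_exponent_ge hq hq1.le (by linarith)
      _ = q ^ m := Real.rpow_natCast q m
      _ ≤ (1 - q) / 2 := hm
  have hr : q ^ s⁻¹ < 1 := Real.rpow_lt_one hq.le hq1 (inv_pos.2 hs)
  refine .of_norm_bounded_eventually_nat
    ((summable_geometric_of_lt_one (by positivity) hr).mul_left 2) ?_
  filter_upwards [hsmall] with m hm
  have hP0 : 0 ≤ qPoch (q ^ ((m : ℝ) + 1)) q (α - 1) :=
    qPoch_rpow_nonneg hq hq1.le (by positivity) (by linarith [m.cast_nonneg (α := ℝ)])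
  have hP2 : qPoch (q ^ ((m : ℝ) + 1)) q (α - 1) ≤ 2 :=
    qPoch_le_two (by positivity) (hx1 m) (by rw [harg m]; positivity) (by rwa [harg m]) hq.le hq1
  rw [Real.norm_of_nonneg (by positivity), mul_comm (2 : ℝ), div_eq_inv_mul,
    Real.rpow_mul_natCast hq.le]
  exact mul_le_mul_of_nonneg_left hP2 (by positivity)

namespace ENNReal

theorem rpow_sub_one_mul_self {x : ℝ≥0∞} {p : ℝ} (hp : 1 ≤ p) : x ^ (p - 1) * x = x ^ p := by
  simpa using (rpow_add_of_nonneg (x := x) (p - 1) 1 (sub_nonneg.2 hp) zero_le_one).symm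

variable {ι : Type*} {p : ℝ}

theorem tsum_mul_le_weight_mul_Lp (hp : 1 ≤ p) (w f : ι → ℝ≥0∞) :
    ∑' i, w i * f i ≤ (∑' i, w i) ^ (1 - p⁻¹) * (∑' i, w i * f i ^ p) ^ p⁻¹ := by
  have hp₀ : 0 < p := by positivity
  refine tsum_le_of_sum_le' zero_le fun s => (inner_le_weight_mul_Lp_of_nonneg s hp w f).trans ?_
  gcongr
  · exact sub_nonneg.2 (inv_le_one_of_one_le₀ hp)
  · exact ENNReal.sum_le_tsum s
  · exact ENNReal.sum_le_tsum s

theorem rpow_tsum_mul_le (hp : 1 ≤ p) (w f : ι → ℝ≥0∞) :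
    (∑' i, w i * f i) ^ p ≤ (∑' i, w i) ^ (p - 1) * ∑' i, w i * f i ^ p := by
  have hp₀ : 0 < p := by positivity
  calc (∑' i, w i * f i) ^ p
      ≤ ((∑' i, w i) ^ (1 - p⁻¹) * (∑' i, w i * f i ^ p) ^ p⁻¹) ^ p :=
        ENNReal.rpow_le_rpow (tsum_mul_le_weight_mul_Lp hp w f) hp₀.le
    _ = (∑' i, w i) ^ (p - 1) * ∑' i, w i * f i ^ p := by
        rw [ENNReal.mul_rpow_of_nonneg _ _ hp₀.le, ← ENNReal.rpow_mul, ← ENNReal.rpow_mul,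
          sub_mul, inv_mul_cancel₀ hp₀.ne', one_mul, ENNReal.rpow_one]

theorem tsum_rpow_tsum_mul_add_le {G : Type*} [AddGroup G] (hp : 1 ≤ p) (w : ι → ℝ≥0∞)
    (s : ι → G) (a : G → ℝ≥0∞) :
    ∑' n, (∑' i, w i * a (n + s i)) ^ p ≤ (∑' i, w i) ^ p * ∑' n, a n ^ p := by
  have shift : ∀ i, ∑' n, a (n + s i) ^ p = ∑' n, a n ^ p := fun i =>
    (Equiv.addRight (s i)).tsum_eq fun n => a n ^ p
  calc ∑' n, (∑' i, w i * a (n + s i)) ^ p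
      ≤ ∑' n, (∑' i, w i) ^ (p - 1) * ∑' i, w i * a (n + s i) ^ p :=
        ENNReal.tsum_le_tsum fun n => rpow_tsum_mul_le hp w _
    _ = (∑' i, w i) ^ (p - 1) * ((∑' i, w i) * ∑' n, a n ^ p) := by
        simp_rw [ENNReal.tsum_mul_left, ENNReal.tsum_comm (α := G), ENNReal.tsum_mul_left, shift,
          ENNReal.tsum_mul_right]
    _ = (∑' i, w i) ^ p * ∑' n, a n ^ p := by
        rw [← mul_assoc, rpow_sub_one_mul_self hp]

end ENNReal

theorem matrix_inequality_Z (q p p' α : ℝ) (hq : 0 < q) (hq1 : q < 1) (hp : 1 < p)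
    (hα : 0 < α) (hp' : 1 / p + 1 / p' = 1) (a : ℤ → ℝ≥0∞) :
    ∑' n : ℤ, ((ENNReal.ofReal q) ^ (-(n : ℝ) / p') *
        ∑' m : ℕ, ENNReal.ofReal (qPoch (q ^ ((m : ℝ) + 1)) q (α - 1)) *
          (ENNReal.ofReal q) ^ (((n : ℝ) + (m : ℝ)) / p') * a (n + m)) ^ p
      ≤ ENNReal.ofReal
          ((∑' n : ℕ, q ^ ((n : ℝ) / p') * qPoch (q ^ ((n : ℝ) + 1)) q (α - 1)) ^ p) *
        ∑' n : ℤ, (a n) ^ p := by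
  set g : ℕ → ℝ := fun m => q ^ ((m : ℝ) / p') * qPoch (q ^ ((m : ℝ) + 1)) q (α - 1)
  have hp'_pos : 0 < p' := one_div_pos.1 <| by
    have : 1 / p < 1 := (div_lt_one (by linarith)).2 hp
    linarith
  have hg : ∀ m, 0 ≤ g m := fun m => mul_nonneg (Real.rpow_nonneg hq.le _)
    (qPoch_rpow_nonneg hq hq1.le (by positivity) (by linarith [m.cast_nonneg (α := ℝ)]))
  have hrow : ∀ n : ℤ, (ENNReal.ofReal q) ^ (-(n : ℝ) / p') *
      ∑' m : ℕ, ENNReal.ofReal (qPoch (q ^ ((m : ℝ) + 1)) q (α - 1)) *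
        (ENNReal.ofReal q) ^ (((n : ℝ) + (m : ℝ)) / p') * a (n + m)
      = ∑' m : ℕ, ENNReal.ofReal (g m) * a (n + m) := by
    intro n
    rw [← ENNReal.tsum_mul_left]
    refine tsum_congr fun m => ?_
    have hpow : (ENNReal.ofReal q) ^ (-(n : ℝ) / p') * (ENNReal.ofReal q) ^ (((n : ℝ) + m) / p')
        = ENNReal.ofReal (q ^ ((m : ℝ) / p')) := by
      rw [← ENNReal.rpow_add _ _ (by simpa using hq) ENNReal.ofReal_ne_top,
        ENNReal.ofReal_rpow_of_pos hq]
      congr 2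
      ring
    rw [ENNReal.ofReal_mul (Real.rpow_nonneg hq.le _), ← hpow]
    ring
  calc _ = ∑' n : ℤ, (∑' m : ℕ, ENNReal.ofReal (g m) * a (n + m)) ^ p := by simp_rw [hrow]
    _ ≤ (∑' m, ENNReal.ofReal (g m)) ^ p * ∑' n : ℤ, a n ^ p :=
      ENNReal.tsum_rpow_tsum_mul_add_le hp.le _ (fun m : ℕ => (m : ℤ)) a
    _ = _ := by
      rw [← ENNReal.ofReal_tsum_of_nonneg hg (summable_rpow_div_mul_qPoch hq hq1 hα hp'_pos),
        ENNReal.ofReal_rpow_of_nonneg (tsum_nonneg hg) (by linarith)]
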